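/- arXiv:1207.7051 — 4 statements merged into one kernel-verified Lean document; each statement's English description precedes it below -/
import Mathlib

section
/- Let Γ be a group generated by a finite symmetric set S (S = S⁻¹) containing the identity, and let π : Γ → G be a surjective homomorphism onto a finite group G. Then there exists ρ ∈ [0,1) such that for every n ≥ 1 and every x ∈ G, |μ_n({g ∈ Γ : π(g) = x}) − 1/|G|| ≤ ρⁿ, where μ_n is the n-step random-walk measure associated with S. -/
/-- n-step random-walk measure of `X ⊆ Γ` for the walk with steps in `S`. -/
noncomputable def rwMeasure {Γ : Type*} [Group Γ] (S : Finset Γ) (n : ℕ) (X : Set Γ) : ℝ :=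
  (Nat.card {s : Fin n → S // (List.ofFn fun i => (s i : Γ)).prod ∈ X} : ℝ) / (S.card : ℝ) ^ n

/-- Markov (averaging) operator associated with `S` and `π : Γ → G`. -/
noncomputable def markovOp {Γ G : Type*} [Group Γ] [Group G] (S : Finset Γ) (π : Γ → G)
    (φ : G → ℝ) : G → ℝ :=
  fun x => (S.card : ℝ)⁻¹ * ∑ s ∈ S, φ (x * π s)

/-- ℓ²-norm of a function on a finite group. -/
noncomputable def l2Norm {G : Type*} [Fintype G] (φ : G → ℝ) : ℝ :=
  Real.sqrt (∑ x, φ x ^ 2)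

namespace RWProof

set_option linter.unusedSectionVars false
set_option maxHeartbeats 1000000

open Finset

variable {Γ G : Type*} [Group Γ] [Group G] [Fintype G] (S : Finset Γ) (π : Γ →* G)

open Classical in
noncomputable def cnt (n : ℕ) (x : G) : ℝ :=
  ∑ w : Fin n → {a // a ∈ S}, if π (List.ofFn fun i => ((w i : Γ))).prod = x then (1:ℝ) else 0

lemma cnt_nonneg (n : ℕ) (x : G) : 0 ≤ cnt S π n x := by
  classical
  exact Finset.sum_nonneg fun w _ => by split <;> norm_num

lemma rwMeasure_eq (n : ℕ) (x : G) :
    rwMeasure S n {g | π g = x} = cnt S π n x / (S.card : ℝ) ^ n := by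
  classical
  rw [rwMeasure, cnt]
  congr 1
  rw [Finset.sum_boole, Nat.card_eq_fintype_card]
  norm_cast
  exact Fintype.card_subtype _

open Classical in
lemma cnt_zero (x : G) : cnt S π 0 x = if (1 : G) = x then (1:ℝ) else 0 := by
  rw [cnt, Fintype.sum_unique]
  simp

lemma cons_prod (n : ℕ) (s : {a // a ∈ S}) (w : Fin n → {a // a ∈ S}) :
      (List.ofFn fun i => ((Fin.cons s w : Fin (n+1) → {a // a ∈ S}) i : Γ)).prod
        = (s : Γ) * (List.ofFn fun i => ((w i : Γ))).prod := by
  have h : (fun i => ((Fin.cons s w : Fin (n+1) → {a // a ∈ S}) i : Γ))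
      = Fin.cons (s : Γ) (fun i => ((w i : Γ))) := by
    funext i
    refine Fin.cases ?_ ?_ i <;> simp
  rw [h, List.ofFn_cons, List.prod_cons]

lemma cnt_succ (n : ℕ) (x : G) :
    cnt S π (n + 1) x = ∑ s : {a // a ∈ S}, cnt S π n ((π s)⁻¹ * x) := by
  classical
  rw [cnt]
  rw [← (Fin.consEquiv (fun _ : Fin (n+1) => ({a // a ∈ S}))).sum_comp, Fintype.sum_prod_type]
  unfold cnt
  refine Finset.sum_congr rfl fun s _ => Finset.sum_congr rfl fun w _ => ?_
  refine if_congr ?_ rfl rfl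
  rw [show (Fin.consEquiv (fun _ : Fin (n+1) => ({a // a ∈ S}))) (s, w) = Fin.cons s w from rfl,
    cons_prod, map_mul]
  constructor
  · intro hh; rw [← hh]; group
  · intro hh; rw [hh]; group

lemma cnt_add (k n : ℕ) (x : G) :
    cnt S π (k + n) x = ∑ w : Fin k → {a // a ∈ S},
      cnt S π n ((π (List.ofFn fun i => ((w i : Γ))).prod)⁻¹ * x) := by
  classical
  induction k generalizing x with
  | zero =>
    rw [Nat.zero_add, Fintype.sum_unique]
    simp
  | succ k ih =>
    rw [show k + 1 + n = (k + n) + 1 by omega, cnt_succ]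
    have : ∀ s : {a // a ∈ S}, cnt S π (k + n) ((π s)⁻¹ * x)
        = ∑ w : Fin k → {a // a ∈ S},
            cnt S π n ((π (List.ofFn fun i => ((w i : Γ))).prod)⁻¹ * ((π s)⁻¹ * x)) :=
      fun s => ih _
    rw [Finset.sum_congr rfl fun s _ => this s,
      ← (Fin.consEquiv (fun _ : Fin (k+1) => ({a // a ∈ S}))).sum_comp, Fintype.sum_prod_type]
    refine Finset.sum_congr rfl fun s _ => Finset.sum_congr rfl fun w _ => ?_
    congr 1
    rw [show (Fin.consEquiv (fun _ : Fin (k+1) => ({a // a ∈ S}))) (s, w) = Fin.cons s w from rfl,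
      cons_prod, map_mul, mul_inv_rev, mul_assoc]

lemma cnt_total (n : ℕ) : ∑ x, cnt S π n x = (S.card : ℝ) ^ n := by
  classical
  unfold cnt
  rw [Finset.sum_comm]
  have : ∀ w : Fin n → {a // a ∈ S},
      (∑ x : G, if π (List.ofFn fun i => ((w i : Γ))).prod = x then (1:ℝ) else 0) = 1 := by
    intro w
    rw [Finset.sum_ite_eq]
    simp
  rw [Finset.sum_congr rfl fun w _ => this w, Finset.sum_const, Finset.card_univ]
  simp [Fintype.card_fun]

lemma exists_word (hsym : ∀ s ∈ S, s⁻¹ ∈ S)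
    (hgen : Subgroup.closure (S : Set Γ) = ⊤) (γ : Γ) :
    ∃ l : List Γ, (∀ a ∈ l, a ∈ S) ∧ l.prod = γ := by
  have hγ : γ ∈ Subgroup.closure (S : Set Γ) := by rw [hgen]; trivial
  induction hγ using Subgroup.closure_induction with
  | mem x hx => exact ⟨[x], by simpa using hx, by simp⟩
  | one => exact ⟨[], by simp, by simp⟩
  | mul x y hx hy ihx ihy =>
    obtain ⟨l1, hl1, hp1⟩ := ihx
    obtain ⟨l2, hl2, hp2⟩ := ihy
    refine ⟨l1 ++ l2, ?_, by rw [List.prod_append, hp1, hp2]⟩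
    intro a ha
    rcases List.mem_append.1 ha with h | h
    · exact hl1 a h
    · exact hl2 a h
  | inv x hx ihx =>
    obtain ⟨l, hl, hp⟩ := ihx
    refine ⟨(l.map fun a => a⁻¹).reverse, ?_, ?_⟩
    · intro a ha
      rw [List.mem_reverse, List.mem_map] at ha
      obtain ⟨b, hb, rfl⟩ := ha
      exact hsym b (hl b hb)
    · rw [← List.prod_inv_reverse, hp]

lemma exists_tuple (hsym : ∀ s ∈ S, s⁻¹ ∈ S)
    (hgen : Subgroup.closure (S : Set Γ) = ⊤) (hπ : Function.Surjective π) (g : G) :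
    ∃ n : ℕ, ∃ w : Fin n → {a // a ∈ S},
      π (List.ofFn fun i => ((w i : Γ))).prod = g := by
  obtain ⟨γ, rfl⟩ := hπ g
  obtain ⟨l, hl, hp⟩ := exists_word S hsym hgen γ
  refine ⟨l.length, fun i => ⟨l.get i, hl _ (l.get_mem i)⟩, ?_⟩
  simp only
  rw [List.ofFn_get, hp]

lemma pad_tuple (h1 : (1 : Γ) ∈ S) (g : G) (n k : ℕ) (hnk : n ≤ k)
    (h : ∃ w : Fin n → {a // a ∈ S}, π (List.ofFn fun i => ((w i : Γ))).prod = g) :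
    ∃ w : Fin k → {a // a ∈ S}, π (List.ofFn fun i => ((w i : Γ))).prod = g := by
  induction k, hnk using Nat.le_induction with
  | base => exact h
  | succ k hk ih =>
    obtain ⟨w, hw⟩ := ih
    exact ⟨Fin.cons ⟨1, h1⟩ w, by rw [cons_prod]; simpa using hw⟩

lemma exists_N (h1 : (1 : Γ) ∈ S) (hsym : ∀ s ∈ S, s⁻¹ ∈ S)
    (hgen : Subgroup.closure (S : Set Γ) = ⊤) (hπ : Function.Surjective π) :
    ∃ N : ℕ, 1 ≤ N ∧ ∀ g : G, ∃ w : Fin N → {a // a ∈ S},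
      π (List.ofFn fun i => ((w i : Γ))).prod = g := by
  have h := fun g : G => exists_tuple S π hsym hgen hπ g
  choose nf hf using h
  refine ⟨1 + univ.sup nf, by omega, fun g => ?_⟩
  refine pad_tuple S π h1 g (nf g) _ ?_ (hf g)
  have := Finset.le_sup (f := nf) (mem_univ g)
  omega

noncomputable def nu (n : ℕ) (x : G) : ℝ := cnt S π n x / (S.card : ℝ) ^ n

lemma rwMeasure_eq_nu (n : ℕ) (x : G) :
    rwMeasure S n {g | π g = x} = nu S π n x := rwMeasure_eq S π n x

lemma nu_nonneg (n : ℕ) (x : G) : 0 ≤ nu S π n x := by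
  have := cnt_nonneg S π n x
  unfold nu
  positivity

lemma nu_add (hS : 0 < S.card) (k n : ℕ) (x : G) :
    nu S π (k + n) x = ((S.card : ℝ) ^ k)⁻¹ * ∑ w : Fin k → {a // a ∈ S},
      nu S π n ((π (List.ofFn fun i => ((w i : Γ))).prod)⁻¹ * x) := by
  have hK : (0:ℝ) < (S.card : ℝ) := by exact_mod_cast hS
  unfold nu
  rw [cnt_add, pow_add, Finset.mul_sum]
  rw [Finset.sum_div]
  refine Finset.sum_congr rfl fun w _ => ?_
  field_simp

noncomputable def Mv (n : ℕ) : ℝ := univ.sup' univ_nonempty (nu S π n)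
noncomputable def mv (n : ℕ) : ℝ := univ.inf' univ_nonempty (nu S π n)

lemma nu_le_Mv (n : ℕ) (x : G) : nu S π n x ≤ Mv S π n :=
  Finset.le_sup' _ (mem_univ x)

lemma mv_le_nu (n : ℕ) (x : G) : mv S π n ≤ nu S π n x :=
  Finset.inf'_le _ (mem_univ x)

lemma mv_le_Mv (n : ℕ) : mv S π n ≤ Mv S π n :=
  le_trans (mv_le_nu S π n 1) (nu_le_Mv S π n 1)

lemma card_tuples (k : ℕ) : Fintype.card (Fin k → {a // a ∈ S}) = S.card ^ k := by
  rw [Fintype.card_fun, Fintype.card_coe, Fintype.card_fin]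

lemma nu_avg_le (hS : 0 < S.card) (k n : ℕ) (x : G) : nu S π (k + n) x ≤ Mv S π n := by
  have hK : (0:ℝ) < (S.card : ℝ) ^ k := by positivity
  rw [nu_add S π hS]
  have hb : ∑ w : Fin k → {a // a ∈ S},
      nu S π n ((π (List.ofFn fun i => ((w i : Γ))).prod)⁻¹ * x)
      ≤ (S.card ^ k : ℕ) • Mv S π n := by
    have := Finset.sum_le_card_nsmul univ
      (fun w : Fin k → {a // a ∈ S} =>
        nu S π n ((π (List.ofFn fun i => ((w i : Γ))).prod)⁻¹ * x))
      (Mv S π n) (fun w _ => nu_le_Mv S π n _)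
    rwa [Finset.card_univ, card_tuples] at this
  calc ((S.card : ℝ) ^ k)⁻¹ * ∑ w : Fin k → {a // a ∈ S},
        nu S π n ((π (List.ofFn fun i => ((w i : Γ))).prod)⁻¹ * x)
      ≤ ((S.card : ℝ) ^ k)⁻¹ * ((S.card ^ k : ℕ) • Mv S π n) := by
        exact mul_le_mul_of_nonneg_left hb (by positivity)
    _ = Mv S π n := by
        rw [nsmul_eq_mul]
        push_cast
        field_simp

lemma mv_avg_le (hS : 0 < S.card) (k n : ℕ) (x : G) : mv S π n ≤ nu S π (k + n) x := by
  have hK : (0:ℝ) < (S.card : ℝ) ^ k := by positivity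
  rw [nu_add S π hS]
  have hb : (S.card ^ k : ℕ) • mv S π n ≤ ∑ w : Fin k → {a // a ∈ S},
      nu S π n ((π (List.ofFn fun i => ((w i : Γ))).prod)⁻¹ * x) := by
    have := Finset.card_nsmul_le_sum univ
      (fun w : Fin k → {a // a ∈ S} =>
        nu S π n ((π (List.ofFn fun i => ((w i : Γ))).prod)⁻¹ * x))
      (mv S π n) (fun w _ => mv_le_nu S π n _)
    rwa [Finset.card_univ, card_tuples] at this
  calc mv S π n = ((S.card : ℝ) ^ k)⁻¹ * ((S.card ^ k : ℕ) • mv S π n) := by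
        rw [nsmul_eq_mul]; push_cast; field_simp
    _ ≤ _ := mul_le_mul_of_nonneg_left hb (by positivity)

lemma Mv_mono (hS : 0 < S.card) (k n : ℕ) : Mv S π (k + n) ≤ Mv S π n :=
  Finset.sup'_le _ _ fun x _ => nu_avg_le S π hS k n x

lemma mv_mono (hS : 0 < S.card) (k n : ℕ) : mv S π n ≤ mv S π (k + n) :=
  Finset.le_inf' _ _ fun x _ => mv_avg_le S π hS k n x

lemma nu_upper (hS : 0 < S.card) (N n : ℕ)
    (hN : ∀ g : G, ∃ w : Fin N → {a // a ∈ S},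
      π (List.ofFn fun i => ((w i : Γ))).prod = g) (x : G) :
    nu S π (N + n) x ≤ ((S.card : ℝ) ^ N)⁻¹ * mv S π n
      + (1 - ((S.card : ℝ) ^ N)⁻¹) * Mv S π n := by
  classical
  have hK : (0:ℝ) < (S.card : ℝ) ^ N := by positivity
  have hc1 : 1 ≤ S.card ^ N := Nat.one_le_pow _ _ hS
  obtain ⟨y, -, hy⟩ := Finset.exists_mem_eq_inf' (univ_nonempty) (nu S π n)
  obtain ⟨w₀, hw₀⟩ := hN (x * y⁻¹)
  have hkey : (π (List.ofFn fun i => ((w₀ i : Γ))).prod)⁻¹ * x = y := by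
    rw [hw₀]; group
  rw [nu_add S π hS]
  set f : (Fin N → {a // a ∈ S}) → ℝ :=
    fun w => nu S π n ((π (List.ofFn fun i => ((w i : Γ))).prod)⁻¹ * x) with hf
  have hsplit : ∑ w, f w = f w₀ + ∑ w ∈ univ.erase w₀, f w :=
    (Finset.add_sum_erase univ f (mem_univ w₀)).symm
  have herase : ∑ w ∈ univ.erase w₀, f w ≤ ((S.card ^ N - 1 : ℕ)) • Mv S π n := by
    have := Finset.sum_le_card_nsmul (univ.erase w₀) f (Mv S π n)
      (fun w _ => nu_le_Mv S π n _)
    rwa [Finset.card_erase_of_mem (mem_univ w₀), Finset.card_univ, card_tuples] at this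
  have hterm : f w₀ = mv S π n := by rw [hf]; simp only; rw [hkey, ← hy]; rw [mv]
  have hsum : ∑ w, f w ≤ mv S π n + ((S.card:ℝ) ^ N - 1) * Mv S π n := by
    rw [hsplit, hterm]
    have : (((S.card ^ N - 1 : ℕ)) : ℝ) = (S.card:ℝ) ^ N - 1 := by
      push_cast [hc1]; ring
    rw [nsmul_eq_mul, this] at herase
    linarith
  calc ((S.card : ℝ) ^ N)⁻¹ * ∑ w, f w
      ≤ ((S.card : ℝ) ^ N)⁻¹ * (mv S π n + ((S.card:ℝ) ^ N - 1) * Mv S π n) :=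
        mul_le_mul_of_nonneg_left hsum (inv_nonneg.mpr hK.le)
    _ = ((S.card : ℝ) ^ N)⁻¹ * mv S π n + (1 - ((S.card : ℝ) ^ N)⁻¹) * Mv S π n := by
        linear_combination (Mv S π n) * (inv_mul_cancel₀ hK.ne')

lemma nu_lower (hS : 0 < S.card) (N n : ℕ)
    (hN : ∀ g : G, ∃ w : Fin N → {a // a ∈ S},
      π (List.ofFn fun i => ((w i : Γ))).prod = g) (x : G) :
    ((S.card : ℝ) ^ N)⁻¹ * Mv S π n + (1 - ((S.card : ℝ) ^ N)⁻¹) * mv S π n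
      ≤ nu S π (N + n) x := by
  classical
  have hK : (0:ℝ) < (S.card : ℝ) ^ N := by positivity
  have hc1 : 1 ≤ S.card ^ N := Nat.one_le_pow _ _ hS
  obtain ⟨y, -, hy⟩ := Finset.exists_mem_eq_sup' (univ_nonempty) (nu S π n)
  obtain ⟨w₀, hw₀⟩ := hN (x * y⁻¹)
  have hkey : (π (List.ofFn fun i => ((w₀ i : Γ))).prod)⁻¹ * x = y := by
    rw [hw₀]; group
  rw [nu_add S π hS]
  set f : (Fin N → {a // a ∈ S}) → ℝ :=
    fun w => nu S π n ((π (List.ofFn fun i => ((w i : Γ))).prod)⁻¹ * x) with hf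
  have hsplit : ∑ w, f w = f w₀ + ∑ w ∈ univ.erase w₀, f w :=
    (Finset.add_sum_erase univ f (mem_univ w₀)).symm
  have herase : ((S.card ^ N - 1 : ℕ)) • mv S π n ≤ ∑ w ∈ univ.erase w₀, f w := by
    have := Finset.card_nsmul_le_sum (univ.erase w₀) f (mv S π n)
      (fun w _ => mv_le_nu S π n _)
    rwa [Finset.card_erase_of_mem (mem_univ w₀), Finset.card_univ, card_tuples] at this
  have hterm : f w₀ = Mv S π n := by rw [hf]; simp only; rw [hkey, ← hy]; rw [Mv]
  have hsum : Mv S π n + ((S.card:ℝ) ^ N - 1) * mv S π n ≤ ∑ w, f w := by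
    rw [hsplit, hterm]
    have : (((S.card ^ N - 1 : ℕ)) : ℝ) = (S.card:ℝ) ^ N - 1 := by
      push_cast [hc1]; ring
    rw [nsmul_eq_mul, this] at herase
    linarith
  calc ((S.card : ℝ) ^ N)⁻¹ * Mv S π n + (1 - ((S.card : ℝ) ^ N)⁻¹) * mv S π n
      = ((S.card : ℝ) ^ N)⁻¹ * (Mv S π n + ((S.card:ℝ) ^ N - 1) * mv S π n) := by
        linear_combination (-(mv S π n)) * (inv_mul_cancel₀ hK.ne')
    _ ≤ ((S.card : ℝ) ^ N)⁻¹ * ∑ w, f w :=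
        mul_le_mul_of_nonneg_left hsum (inv_nonneg.mpr hK.le)

lemma osc_contract (hS : 0 < S.card) (N n : ℕ)
    (hN : ∀ g : G, ∃ w : Fin N → {a // a ∈ S},
      π (List.ofFn fun i => ((w i : Γ))).prod = g) :
    Mv S π (N + n) - mv S π (N + n)
      ≤ (1 - 2 * ((S.card : ℝ) ^ N)⁻¹) * (Mv S π n - mv S π n) := by
  have h1 : Mv S π (N + n) ≤ ((S.card : ℝ) ^ N)⁻¹ * mv S π n
      + (1 - ((S.card : ℝ) ^ N)⁻¹) * Mv S π n :=
    Finset.sup'_le _ _ fun x _ => nu_upper S π hS N n hN x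
  have h2 : ((S.card : ℝ) ^ N)⁻¹ * Mv S π n + (1 - ((S.card : ℝ) ^ N)⁻¹) * mv S π n
      ≤ mv S π (N + n) :=
    Finset.le_inf' _ _ fun x _ => nu_lower S π hS N n hN x
  nlinarith [h1, h2]

lemma nu_total (hS : 0 < S.card) (n : ℕ) : ∑ x, nu S π n x = 1 := by
  have hK : (0:ℝ) < (S.card : ℝ) ^ n := by
    have : (0:ℝ) < (S.card : ℝ) := by exact_mod_cast hS
    positivity
  unfold nu
  rw [← Finset.sum_div, cnt_total, div_self (ne_of_gt hK)]

lemma nu_dist (hS : 0 < S.card) (n : ℕ) (x : G) :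
    |nu S π n x - 1 / (Fintype.card G : ℝ)| ≤ Mv S π n - mv S π n := by
  have hG : (0:ℝ) < (Fintype.card G : ℝ) := by
    exact_mod_cast Fintype.card_pos
  have havg1 : (1:ℝ) ≤ (Fintype.card G : ℝ) * Mv S π n := by
    have := Finset.sum_le_card_nsmul univ (nu S π n) (Mv S π n)
      (fun y _ => nu_le_Mv S π n y)
    rw [nu_total S π hS, Finset.card_univ, nsmul_eq_mul] at this
    exact this
  have havg2 : (Fintype.card G : ℝ) * mv S π n ≤ 1 := by
    have := Finset.card_nsmul_le_sum univ (nu S π n) (mv S π n)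
      (fun y _ => mv_le_nu S π n y)
    rw [nu_total S π hS, Finset.card_univ, nsmul_eq_mul] at this
    exact this
  have hb1 : 1 / (Fintype.card G : ℝ) ≤ Mv S π n := by
    rw [div_le_iff₀ hG]; linarith
  have hb2 : mv S π n ≤ 1 / (Fintype.card G : ℝ) := by
    rw [le_div_iff₀ hG]; linarith
  have h3 := nu_le_Mv S π n x
  have h4 := mv_le_nu S π n x
  rw [abs_le]
  constructor <;> linarith

lemma exists_ne_target [Nontrivial G] (h1 : (1 : Γ) ∈ S)
    (hgen : Subgroup.closure (S : Set Γ) = ⊤) (hπ : Function.Surjective π) (x : G) :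
    ∃ s₀ ∈ S, π s₀ ≠ x := by
  by_cases hx : x = 1
  · subst hx
    by_contra hcon
    push_neg at hcon
    have hall : ∀ γ : Γ, π γ = 1 := by
      intro γ
      have hγ : γ ∈ Subgroup.closure (S : Set Γ) := by rw [hgen]; trivial
      induction hγ using Subgroup.closure_induction with
      | mem a ha => exact hcon a ha
      | one => exact map_one π
      | mul a b _ _ iha ihb => rw [map_mul, iha, ihb, mul_one]
      | inv a _ iha => rw [map_inv, iha, inv_one]
    obtain ⟨y, hy⟩ := exists_ne (1 : G)
    obtain ⟨γ, rfl⟩ := hπ y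
    exact hy (hall γ)
  · exact ⟨1, h1, by rw [map_one]; exact fun h => hx h.symm⟩

lemma cnt_one_le (hS : 0 < S.card) {x : G} (hex : ∃ s₀ ∈ S, π s₀ ≠ x) :
    cnt S π 1 x ≤ (S.card : ℝ) - 1 := by
  classical
  obtain ⟨s₀, hs₀S, hs₀⟩ := hex
  rw [show (1:ℕ) = 0 + 1 from rfl, cnt_succ S π]
  set f : {a // a ∈ S} → ℝ := fun s => cnt S π 0 ((π s)⁻¹ * x) with hf
  have hterm : f ⟨s₀, hs₀S⟩ = 0 := by
    rw [hf]
    simp only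
    rw [cnt_zero S π]
    rw [if_neg]
    intro hcon
    rw [eq_inv_mul_iff_mul_eq, mul_one] at hcon
    exact hs₀ hcon
  have hsplit : ∑ s, f s = f ⟨s₀, hs₀S⟩ + ∑ s ∈ univ.erase ⟨s₀, hs₀S⟩, f s :=
    (Finset.add_sum_erase univ f (mem_univ _)).symm
  have hb : ∑ s ∈ univ.erase ⟨s₀, hs₀S⟩, f s ≤ ((S.card - 1 : ℕ)) • (1:ℝ) := by
    have hle : ∀ s ∈ univ.erase ⟨s₀, hs₀S⟩, f s ≤ 1 := by
      intro s _
      rw [hf]; simp only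
      rw [cnt_zero S π]
      split <;> norm_num
    have := Finset.sum_le_card_nsmul _ f 1 hle
    rwa [Finset.card_erase_of_mem (mem_univ _), Finset.card_univ, Fintype.card_coe] at this
  rw [hsplit, hterm]
  have : (((S.card - 1 : ℕ)) : ℝ) = (S.card : ℝ) - 1 := by push_cast [hS]; ring
  rw [nsmul_eq_mul, this] at hb
  linarith

lemma osc_one (hS : 0 < S.card) (hex : ∀ x : G, ∃ s₀ ∈ S, π s₀ ≠ x) :
    Mv S π 1 - mv S π 1 ≤ 1 - (S.card : ℝ)⁻¹ := by
  have hK : (0:ℝ) < (S.card : ℝ) := by exact_mod_cast hS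
  have h1 : Mv S π 1 ≤ 1 - (S.card : ℝ)⁻¹ := by
    refine Finset.sup'_le _ _ fun x _ => ?_
    have := cnt_one_le S π hS (hex x)
    rw [nu]
    rw [div_le_iff₀ (by positivity : (0:ℝ) < (S.card:ℝ)^1)]
    rw [pow_one]
    calc cnt S π 1 x ≤ (S.card : ℝ) - 1 := this
      _ = (1 - (S.card : ℝ)⁻¹) * ↑S.card := by field_simp
  have h2 : 0 ≤ mv S π 1 := Finset.le_inf' _ _ fun x _ => nu_nonneg S π 1 x
  linarith

end RWProof

theorem stmt1 {Γ G : Type*} [Group Γ] [Group G] [Fintype G] (S : Finset Γ)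
    (h1 : (1 : Γ) ∈ S) (hsym : ∀ s ∈ S, s⁻¹ ∈ S)
    (hgen : Subgroup.closure (S : Set Γ) = ⊤)
    (π : Γ →* G) (hπ : Function.Surjective π) :
    ∃ ρ : ℝ, 0 ≤ ρ ∧ ρ < 1 ∧ ∀ n : ℕ, 1 ≤ n → ∀ x : G,
      |rwMeasure S n {g | π g = x} - 1 / (Fintype.card G : ℝ)| ≤ ρ ^ n := by
  classical
  have hS : 0 < S.card := Finset.card_pos.mpr ⟨1, h1⟩
  have hK : (0:ℝ) < (S.card : ℝ) := by exact_mod_cast hS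
  rcases subsingleton_or_nontrivial G with hGs | hGn
  · refine ⟨0, le_refl 0, zero_lt_one, fun n hn x => ?_⟩
    have hnu : RWProof.nu S π n x = 1 := by
      have := RWProof.nu_total S π hS n
      rwa [Fintype.sum_subsingleton _ x] at this
    have hcard : (Fintype.card G : ℝ) = 1 := by
      have : Fintype.card G = 1 :=
        Fintype.card_eq_one_iff.mpr ⟨x, fun y => Subsingleton.elim y x⟩
      rw [this]; norm_num
    rw [RWProof.rwMeasure_eq_nu S π n x, hnu, hcard]
    simp [zero_pow (by omega : n ≠ 0)]
  · have hex := fun x => RWProof.exists_ne_target S π h1 hgen hπ x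
    obtain ⟨s₀, hs₀S, hs₀⟩ := hex 1
    have hS2 : 2 ≤ S.card := by
      refine Finset.one_lt_card.mpr ⟨1, h1, s₀, hs₀S, fun h => hs₀ ?_⟩
      rw [← h, map_one]
    have hK2 : (2:ℝ) ≤ (S.card:ℝ) := by exact_mod_cast hS2
    obtain ⟨N, hN1, hNw⟩ := RWProof.exists_N S π h1 hsym hgen hπ
    have hKN2 : (2:ℝ) ≤ (S.card:ℝ) ^ N := by
      calc (2:ℝ) ≤ (S.card:ℝ) := hK2
        _ = (S.card:ℝ) ^ 1 := (pow_one _).symm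
        _ ≤ (S.card:ℝ) ^ N := pow_le_pow_right₀ (by linarith) hN1
    have hKNpos : (0:ℝ) < (S.card:ℝ) ^ N := by positivity
    set ε : ℝ := ((S.card:ℝ) ^ N)⁻¹ with hεdef
    have hεpos : 0 < ε := by positivity
    have hεle : ε ≤ 1/2 := by
      rw [hεdef]
      rw [inv_le_comm₀ hKNpos (by norm_num : (0:ℝ) < 1/2)]
      linarith
    set lam : ℝ := 1 - 2*ε with hlamdef
    have hlam0 : 0 ≤ lam := by rw [hlamdef]; linarith
    have hlam1 : lam < 1 := by rw [hlamdef]; linarith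
    set c : ℝ := 1 - (S.card:ℝ)⁻¹ with hcdef
    have hinv : (0:ℝ) < (S.card:ℝ)⁻¹ := by positivity
    have hinvle : (S.card:ℝ)⁻¹ ≤ 1/2 := by
      rw [inv_le_comm₀ hK (by norm_num : (0:ℝ) < 1/2)]
      linarith
    have hc0 : 0 < c := by rw [hcdef]; linarith
    have hc1 : c < 1 := by rw [hcdef]; linarith
    set θ : ℝ := max c lam with hθdef
    have hθ0 : 0 < θ := lt_of_lt_of_le hc0 (le_max_left _ _)
    have hθ1 : θ < 1 := max_lt hc1 hlam1
    set D : ℕ → ℝ := fun n => RWProof.Mv S π n - RWProof.mv S π n with hD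
    have hDmono : ∀ k n, D (k + n) ≤ D n := fun k n =>
      sub_le_sub (RWProof.Mv_mono S π hS k n) (RWProof.mv_mono S π hS k n)
    have hstep : ∀ n, D (N + n) ≤ lam * D n := fun n =>
      RWProof.osc_contract S π hS N n hNw
    have hD1 : D 1 ≤ c := RWProof.osc_one S π hS hex
    have hiter : ∀ k, D (1 + k * N) ≤ c * lam ^ k := by
      intro k
      induction k with
      | zero => simpa using hD1
      | succ k ih =>
        have heq : 1 + (k+1) * N = N + (1 + k * N) := by ring
        rw [heq]
        calc D (N + (1 + k*N)) ≤ lam * D (1 + k*N) := hstep _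
          _ ≤ lam * (c * lam ^ k) := mul_le_mul_of_nonneg_left ih hlam0
          _ = c * lam ^ (k+1) := by ring
    have hN0 : (1:ℝ) ≤ (N:ℝ) := by exact_mod_cast hN1
    have h2N : (0:ℝ) < 2*(N:ℝ) := by linarith
    set e : ℝ := (2*(N:ℝ))⁻¹ with hedef
    have hepos : 0 < e := by positivity
    refine ⟨θ ^ e, Real.rpow_nonneg (le_of_lt hθ0) e,
      Real.rpow_lt_one (le_of_lt hθ0) hθ1 hepos, ?_⟩
    intro n hn x
    rw [RWProof.rwMeasure_eq_nu S π n x]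
    have hdist := RWProof.nu_dist S π hS n x
    set k : ℕ := (n - 1) / N with hk
    obtain ⟨P, hP⟩ : ∃ P, P = N * k := ⟨_, rfl⟩
    have h0 : P + (n-1) % N = n - 1 := by rw [hP, hk]; exact Nat.div_add_mod (n-1) N
    have h2 : (n-1) % N < N := Nat.mod_lt _ (by omega)
    have hk1 : 1 + k * N ≤ n := by
      have : k * N = P := by rw [hP]; ring
      omega
    have hDn : D n ≤ c * lam ^ k := by
      calc D n = D ((n - (1 + k*N)) + (1 + k*N)) := by rw [Nat.sub_add_cancel hk1]
        _ ≤ D (1 + k*N) := hDmono _ _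
        _ ≤ c * lam ^ k := hiter k
    have hnN : (n : ℝ) ≤ (N:ℝ) * (k:ℝ) + (N:ℝ) := by
      have hn' : n ≤ P + N := by omega
      have : (n:ℝ) ≤ (P:ℝ) + (N:ℝ) := by exact_mod_cast hn'
      have hPr : (P:ℝ) = (N:ℝ) * (k:ℝ) := by exact_mod_cast hP
      linarith [hPr ▸ this]
    have hk0 : (0:ℝ) ≤ (k:ℝ) := Nat.cast_nonneg k
    have hexp : (n:ℝ) * e ≤ ((k:ℝ) + 1) := by
      rw [hedef, ← div_eq_mul_inv, div_le_iff₀ h2N]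
      nlinarith
    calc |RWProof.nu S π n x - 1 / (Fintype.card G : ℝ)|
        ≤ D n := hdist
      _ ≤ c * lam ^ k := hDn
      _ ≤ θ * θ ^ k := by
          refine mul_le_mul (le_max_left _ _) ?_ (pow_nonneg hlam0 k) (le_of_lt hθ0)
          exact pow_le_pow_left₀ hlam0 (le_max_right _ _) k
      _ = θ ^ (k+1) := by rw [pow_succ]; ring
      _ = θ ^ ((k+1 : ℕ) : ℝ) := (Real.rpow_natCast θ (k+1)).symm
      _ ≤ θ ^ ((n:ℝ) * e) := by
          refine Real.rpow_le_rpow_of_exponent_ge hθ0 (le_of_lt hθ1) ?_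
          push_cast
          exact hexp
      _ = (θ ^ e) ^ n := by
          rw [← Real.rpow_natCast (θ ^ e) n, ← Real.rpow_mul (le_of_lt hθ0)]
          ring_nf
end

section
/- Let Γ be a group generated by a finite symmetric set S (S = S⁻¹) containing the identity, let P be a finite set of primes, and for each p ∈ P let π_p : Γ → Γ_p be a surjective homomorphism onto a finite group such that the simultaneous reduction map g ↦ (π_p(g))_{p∈P} from Γ to ∏_{p∈P} Γ_p is surjective. Let Ω_p ⊆ Γ_p for each p ∈ P. Then μ_n({g ∈ Γ : π_p(g) ∉ Ω_p for all p ∈ P}) converges, as n → ∞, to ∏_{p∈P} (1 − |Ω_p|/|Γ_p|), where μ_n is the n-step random-walk measure associated with S. -/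
set_option linter.unusedSectionVars false

section Aux

open Finset



section Counting
variable {A B H : Type*} [Fintype A] [Fintype B] [DecidableEq H] [Fintype H]

lemma card_fiber_mem (g : A → H) (X : Finset H) :
    Nat.card {a : A // g a ∈ X} = ∑ x ∈ X, Nat.card {a : A // g a = x} := by
  classical
  simp only [Nat.card_eq_fintype_card, Fintype.card_subtype]
  rw [Finset.card_eq_sum_card_fiberwise (f := g) (s := Finset.univ.filter fun a => g a ∈ X) (t := X)
    (fun a ha => (Finset.mem_filter.1 ha).2)]
  refine Finset.sum_congr rfl fun x hx => ?_
  congr 1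
  rw [Finset.filter_filter]
  refine Finset.filter_congr fun a _ => ?_
  constructor
  · exact fun h => h.2
  · exact fun h => ⟨h ▸ hx, h⟩

lemma card_fiber_total (g : A → H) :
    ∑ x : H, Nat.card {a : A // g a = x} = Fintype.card A := by
  classical
  simp only [Nat.card_eq_fintype_card]
  rw [← Fintype.card_sigma]
  exact Fintype.card_congr (Equiv.sigmaFiberEquiv g)

variable [Group H]

/-- fiber equivalence for a product map -/
def mulFiberEquiv (g₁ : A → H) (g₂ : B → H) (x y : H) :
    {q : {p : A × B // g₁ p.1 * g₂ p.2 = x} // g₁ q.1.1 = y} ≃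
      {a : A // g₁ a = y} × {b : B // g₂ b = y⁻¹ * x} where
  toFun q := (⟨q.1.1.1, q.2⟩, ⟨q.1.1.2, by
    obtain ⟨⟨⟨a, b⟩, hab⟩, hy⟩ := q
    dsimp at hab hy ⊢
    rw [← hy, eq_inv_mul_iff_mul_eq]; exact hab⟩)
  invFun ab := ⟨⟨(ab.1.1, ab.2.1), by rw [ab.1.2, ab.2.2, mul_inv_cancel_left]⟩, ab.1.2⟩
  left_inv q := rfl
  right_inv ab := rfl

lemma card_mul_fiber (g₁ : A → H) (g₂ : B → H) (x : H) :
    Nat.card {p : A × B // g₁ p.1 * g₂ p.2 = x} =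
      ∑ y : H, Nat.card {a : A // g₁ a = y} * Nat.card {b : B // g₂ b = y⁻¹ * x} := by
  classical
  have h1 : Nat.card {p : A × B // g₁ p.1 * g₂ p.2 = x} =
      ∑ y : H, Nat.card {q : {p : A × B // g₁ p.1 * g₂ p.2 = x} // g₁ q.1.1 = y} :=
    by rw [Nat.card_eq_fintype_card,
      ← card_fiber_total (fun q : {p : A × B // g₁ p.1 * g₂ p.2 = x} => g₁ q.1.1)]
  rw [h1]
  refine Finset.sum_congr rfl fun y _ => ?_
  rw [Nat.card_congr (mulFiberEquiv g₁ g₂ x y), Nat.card_prod]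

end Counting

section RW
variable {Γ H : Type*} [Group Γ] [Group H] [Fintype H] [DecidableEq H]

noncomputable def cnt (S : Finset Γ) (f : Γ →* H) (n : ℕ) (x : H) : ℕ :=
  Nat.card {s : Fin n → S // f (List.ofFn fun i => (s i : Γ)).prod = x}

lemma prod_split (S : Finset Γ) {m n : ℕ} (s : Fin (m + n) → S) :
    (List.ofFn fun i => (s i : Γ)).prod =
      (List.ofFn fun i => (s (Fin.castAdd n i) : Γ)).prod *
      (List.ofFn fun j => (s (Fin.natAdd m j) : Γ)).prod := by
  rw [List.ofFn_add, List.prod_append]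
  rfl

def splitEquiv (S : Finset Γ) (m n : ℕ) : (Fin (m + n) → S) ≃ (Fin m → S) × (Fin n → S) where
  toFun s := (fun i => s (Fin.castAdd n i), fun j => s (Fin.natAdd m j))
  invFun p := Fin.addCases p.1 p.2
  left_inv s := by
    funext i
    refine Fin.addCases (motive := fun i => Fin.addCases _ _ i = s i) ?_ ?_ i <;> intro j <;> simp
  right_inv p := by
    refine Prod.ext ?_ ?_ <;> funext i <;> simp

end RW

section RW2
variable {Γ H : Type*} [Group Γ] [Group H] [Fintype H] [DecidableEq H]

lemma cnt_add (S : Finset Γ) (f : Γ →* H) (m n : ℕ) (x : H) :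
    cnt S f (m + n) x = ∑ y : H, cnt S f m y * cnt S f n (y⁻¹ * x) := by
  classical
  unfold cnt
  rw [← card_mul_fiber (fun a : Fin m → S => f (List.ofFn fun i => (a i : Γ)).prod)
        (fun b : Fin n → S => f (List.ofFn fun i => (b i : Γ)).prod) x]
  apply Nat.card_congr
  refine (splitEquiv S m n).subtypeEquiv fun s => ?_
  rw [prod_split S s, map_mul]
  exact Iff.rfl

lemma cnt_total (S : Finset Γ) (f : Γ →* H) (n : ℕ) :
    ∑ x : H, cnt S f n x = S.card ^ n := by
  classical
  unfold cnt
  rw [card_fiber_total]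
  simp [Fintype.card_fun]

lemma rwMeasure_preimage (S : Finset Γ) (f : Γ →* H) (X : Finset H) (n : ℕ) :
    rwMeasure S n (f ⁻¹' ↑X) = (∑ x ∈ X, (cnt S f n x : ℝ)) / (S.card : ℝ) ^ n := by
  classical
  unfold rwMeasure cnt
  congr 1
  rw [← Nat.cast_sum]
  congr 1
  rw [← card_fiber_mem (fun s : Fin n → S => f (List.ofFn fun i => (s i : Γ)).prod) X]
  exact Nat.card_congr (Equiv.subtypeEquivRight fun s => by simp)

end RW2

section Reach
variable {Γ H : Type*} [Group Γ] [Group H] [Fintype H] [DecidableEq H]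

lemma reach_exists (S : Finset Γ) (hsym : ∀ s ∈ S, s⁻¹ ∈ S)
    (hgen : Subgroup.closure (S : Set Γ) = ⊤) (g : Γ) :
    ∃ n : ℕ, Nonempty {s : Fin n → S // (List.ofFn fun i => (s i : Γ)).prod = g} := by
  have hg : g ∈ Submonoid.closure (S : Set Γ) := by
    have h : g ∈ (Subgroup.closure (S : Set Γ)).toSubmonoid := by
      rw [hgen]; trivial
    rw [Subgroup.closure_toSubmonoid] at h
    have hU : (S : Set Γ) ∪ (S : Set Γ)⁻¹ = (S : Set Γ) := by
      apply Set.union_eq_self_of_subset_right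
      intro x hx
      rw [Set.mem_inv] at hx
      simpa using hsym _ hx
    rwa [hU] at h
  obtain ⟨l, hl, hp⟩ := Submonoid.exists_list_of_mem_closure hg
  refine ⟨l.length, ⟨⟨fun i => ⟨l.get i, hl _ (l.get_mem _)⟩, ?_⟩⟩⟩
  simpa [List.ofFn_get] using hp

lemma reach_pad (S : Finset Γ) (h1 : (1 : Γ) ∈ S) (g : Γ) {n m : ℕ} (hnm : n ≤ m)
    (h : Nonempty {s : Fin n → S // (List.ofFn fun i => (s i : Γ)).prod = g}) :
    Nonempty {s : Fin m → S // (List.ofFn fun i => (s i : Γ)).prod = g} := by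
  induction m, hnm using Nat.le_induction with
  | base => exact h
  | succ m hm ih =>
    obtain ⟨s, hs⟩ := ih
    refine ⟨⟨Fin.cons ⟨1, h1⟩ s, ?_⟩⟩
    rw [List.ofFn_succ]
    simpa using hs

lemma exists_n0 (S : Finset Γ) (h1 : (1:Γ) ∈ S) (hsym : ∀ s ∈ S, s⁻¹ ∈ S)
    (hgen : Subgroup.closure (S : Set Γ) = ⊤) (f : Γ →* H) (hf : Function.Surjective f) :
    ∃ n₀ : ℕ, 0 < n₀ ∧ ∀ x : H, 0 < cnt S f n₀ x := by
  classical
  have key : ∀ x : H, ∃ n : ℕ,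
      Nonempty {s : Fin n → S // (List.ofFn fun i => (s i : Γ)).prod = (hf x).choose} :=
    fun x => reach_exists S hsym hgen _
  choose nf hnf using key
  refine ⟨max 1 (Finset.univ.sup nf),
    Nat.lt_of_lt_of_le Nat.zero_lt_one (le_max_left _ _), fun x => ?_⟩
  have hpad := reach_pad S h1 (hf x).choose (m := max 1 (Finset.univ.sup nf))
      (le_trans (Finset.le_sup (Finset.mem_univ x)) (le_max_right _ _)) (hnf x)
  obtain ⟨s, hs⟩ := hpad
  haveI : Nonempty {s : Fin (max 1 (Finset.univ.sup nf)) → S //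
      f (List.ofFn fun i => (s i : Γ)).prod = x} :=
    ⟨⟨s, by rw [hs, (hf x).choose_spec]⟩⟩
  unfold cnt
  exact Nat.card_pos

end Reach

open Filter in
theorem key_tendsto {Γ H : Type*} [Group Γ] [Group H] [Fintype H] [DecidableEq H]
    (S : Finset Γ) (h1 : (1 : Γ) ∈ S) (hsym : ∀ s ∈ S, s⁻¹ ∈ S)
    (hgen : Subgroup.closure (S : Set Γ) = ⊤)
    (f : Γ →* H) (hf : Function.Surjective f) (X : Finset H) :
    Tendsto (fun n => rwMeasure S n (f ⁻¹' ↑X)) atTop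
      (nhds ((X.card : ℝ) / (Fintype.card H : ℝ))) := by
  classical
  obtain ⟨n₀, hn₀pos, hreach⟩ := exists_n0 S h1 hsym hgen f hf
  have hScard : 0 < S.card := Finset.card_pos.mpr ⟨1, h1⟩
  set D : ℝ := (S.card : ℝ) with hD_def
  have hD : 0 < D := by rw [hD_def]; exact_mod_cast hScard
  set Nr : ℝ := (Fintype.card H : ℝ) with hNr_def
  have hNr : 0 < Nr := by rw [hNr_def]; exact_mod_cast Fintype.card_pos (α := H)
  set ν : ℕ → H → ℝ := fun n x => (cnt S f n x : ℝ) / D ^ n with hν_def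
  have hν0 : ∀ n x, 0 ≤ ν n x := fun n x => by positivity
  have hνsum : ∀ n, ∑ x : H, ν n x = 1 := by
    intro n
    rw [← Finset.sum_div]
    rw [div_eq_one_iff_eq (by positivity)]
    rw [← Nat.cast_sum, cnt_total]
    push_cast
    ring
  have hνconv : ∀ m n x, ν (m + n) x = ∑ y : H, ν m y * ν n (y⁻¹ * x) := by
    intro m n x
    simp only [hν_def]
    rw [cnt_add, Nat.cast_sum]
    rw [Finset.sum_div]
    refine Finset.sum_congr rfl fun y _ => ?_
    rw [pow_add]
    push_cast
    field_simp
  set δ : ℕ → H → ℝ := fun n x => ν n x - 1 / Nr with hδ_def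
  set M : ℕ → ℝ := fun n => Finset.univ.sup' Finset.univ_nonempty (fun x => |δ n x|) with hM_def
  have hM_ub : ∀ n x, |δ n x| ≤ M n := fun n x =>
    Finset.le_sup' (fun x => |δ n x|) (Finset.mem_univ x)
  have hM0 : ∀ n, 0 ≤ M n := fun n => le_trans (abs_nonneg (δ n 1)) (hM_ub n 1)
  have hδconv : ∀ m n x, δ (m + n) x = ∑ y : H, ν m y * δ n (y⁻¹ * x) := by
    intro m n x
    simp only [hδ_def, mul_sub, Finset.sum_sub_distrib, ← Finset.sum_mul, hνsum, one_mul,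
      ← hνconv]
  have hA : ∀ m n, M (m + n) ≤ M n := by
    intro m n
    refine Finset.sup'_le _ _ fun x _ => ?_
    rw [hδconv]
    calc |∑ y : H, ν m y * δ n (y⁻¹ * x)| ≤ ∑ y : H, |ν m y * δ n (y⁻¹ * x)| :=
          Finset.abs_sum_le_sum_abs _ _
      _ ≤ ∑ y : H, ν m y * M n := by
          refine Finset.sum_le_sum fun y _ => ?_
          rw [abs_mul, abs_of_nonneg (hν0 m y)]
          exact mul_le_mul_of_nonneg_left (hM_ub n _) (hν0 m y)
      _ = M n := by rw [← Finset.sum_mul, hνsum, one_mul]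
  have hsum_inv : ∀ n x, ∑ y : H, ν n (y⁻¹ * x) = 1 := by
    intro n x
    rw [← hνsum n]
    exact Equiv.sum_comp ((Equiv.inv H).trans (Equiv.mulRight x)) (ν n)
  have hδsum : ∀ n x, ∑ y : H, δ n (y⁻¹ * x) = 0 := by
    intro n x
    simp only [hδ_def, Finset.sum_sub_distrib, hsum_inv, Finset.sum_const, Finset.card_univ,
      nsmul_eq_mul, ← hNr_def]
    rw [mul_one_div, div_self (ne_of_gt hNr), sub_self]
  set ε : ℝ := 1 / D ^ n₀ with hε_def
  have hε : 0 < ε := by positivity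
  have hεν : ∀ x, ε ≤ ν n₀ x := by
    intro x
    simp only [hε_def, hν_def]
    gcongr
    exact_mod_cast hreach x
  set α : ℝ := Nr * ε with hα_def
  have hα_pos : 0 < α := mul_pos hNr hε
  have hα_le1 : α ≤ 1 := by
    have h := Finset.sum_le_sum (fun y (_ : y ∈ Finset.univ) => hεν y)
    rw [hνsum n₀, Finset.sum_const, Finset.card_univ, nsmul_eq_mul] at h
    rw [hα_def, hNr_def]
    exact h
  have hB : ∀ n, M (n₀ + n) ≤ (1 - α) * M n := by
    intro n
    refine Finset.sup'_le _ _ fun x _ => ?_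
    have h0 : δ (n₀ + n) x = ∑ y : H, (ν n₀ y - ε) * δ n (y⁻¹ * x) := by
      rw [hδconv, eq_comm]
      simp only [sub_mul, Finset.sum_sub_distrib, ← Finset.mul_sum, hδsum, mul_zero, sub_zero]
    rw [h0]
    calc |∑ y : H, (ν n₀ y - ε) * δ n (y⁻¹ * x)|
        ≤ ∑ y : H, |(ν n₀ y - ε) * δ n (y⁻¹ * x)| := Finset.abs_sum_le_sum_abs _ _
      _ ≤ ∑ y : H, (ν n₀ y - ε) * M n := by
          refine Finset.sum_le_sum fun y _ => ?_
          rw [abs_mul, abs_of_nonneg (sub_nonneg.2 (hεν y))]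
          exact mul_le_mul_of_nonneg_left (hM_ub n _) (sub_nonneg.2 (hεν y))
      _ = (1 - α) * M n := by
          rw [← Finset.sum_mul, Finset.sum_sub_distrib, hνsum, Finset.sum_const,
            Finset.card_univ, nsmul_eq_mul, hα_def, hNr_def]
  have h1α : 0 ≤ 1 - α := by linarith
  have hgeo : ∀ q r, M (n₀ * q + r) ≤ (1 - α) ^ q * M r := by
    intro q
    induction q with
    | zero => intro r; simpa using le_refl (M r)
    | succ q ih =>
      intro r
      have he : n₀ * (q + 1) + r = n₀ + (n₀ * q + r) := by ring
      rw [he]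
      calc M (n₀ + (n₀ * q + r)) ≤ (1 - α) * M (n₀ * q + r) := hB _
        _ ≤ (1 - α) * ((1 - α) ^ q * M r) := mul_le_mul_of_nonneg_left (ih r) h1α
        _ = (1 - α) ^ (q + 1) * M r := by ring
  have hbound : ∀ n, M n ≤ (1 - α) ^ (n / n₀) * M 0 := by
    intro n
    have h1' : n₀ * (n / n₀) + n % n₀ = n := Nat.div_add_mod n n₀
    calc M n = M (n₀ * (n / n₀) + n % n₀) := by rw [h1']
      _ ≤ (1 - α) ^ (n / n₀) * M (n % n₀) := hgeo _ _
      _ ≤ (1 - α) ^ (n / n₀) * M 0 := by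
          refine mul_le_mul_of_nonneg_left ?_ (pow_nonneg h1α _)
          simpa using hA (n % n₀) 0
  have hdiv : Filter.Tendsto (fun n : ℕ => n / n₀) atTop atTop := by
    refine Filter.tendsto_atTop_atTop.2 fun b => ⟨n₀ * b, fun n hn => ?_⟩
    rw [Nat.le_div_iff_mul_le hn₀pos]
    rwa [mul_comm]
  have hpow : Filter.Tendsto (fun n : ℕ => (1 - α) ^ (n / n₀) * M 0) atTop (nhds 0) := by
    have h2 : Filter.Tendsto (fun k : ℕ => (1 - α) ^ k) atTop (nhds 0) :=
      tendsto_pow_atTop_nhds_zero_of_lt_one h1α (by linarith)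
    have h3 := (h2.comp hdiv).mul_const (M 0)
    simpa using h3
  have hMlim : Filter.Tendsto M atTop (nhds 0) := squeeze_zero hM0 hbound hpow
  have hνlim : ∀ x, Filter.Tendsto (fun n => ν n x) atTop (nhds (1 / Nr)) := by
    intro x
    have hd : Filter.Tendsto (fun n => δ n x) atTop (nhds 0) := by
      refine squeeze_zero_norm (fun n => ?_) hMlim
      simpa [Real.norm_eq_abs] using hM_ub n x
    have h4 := hd.add_const (1 / Nr)
    simp only [hδ_def, sub_add_cancel, zero_add] at h4
    exact h4
  have hrw : ∀ n, rwMeasure S n (f ⁻¹' ↑X) = ∑ x ∈ X, ν n x := by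
    intro n
    rw [rwMeasure_preimage, Finset.sum_div]
  have hlim : Filter.Tendsto (fun n => ∑ x ∈ X, ν n x) atTop (nhds (∑ _x ∈ X, 1 / Nr)) :=
    tendsto_finset_sum _ fun x _ => hνlim x
  have hfin : (∑ _x ∈ X, 1 / Nr) = (X.card : ℝ) / (Fintype.card H : ℝ) := by
    rw [Finset.sum_const, nsmul_eq_mul, mul_one_div, hNr_def]
  rw [← hfin]
  exact Filter.Tendsto.congr (fun n => (hrw n).symm) hlim

end Aux

theorem stmt2 {Γ : Type*} [Group Γ] (S : Finset Γ)
    (h1 : (1 : Γ) ∈ S) (hsym : ∀ s ∈ S, s⁻¹ ∈ S)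
    (hgen : Subgroup.closure (S : Set Γ) = ⊤)
    (P : Finset ℕ) (hP : ∀ p ∈ P, p.Prime)
    (G : ℕ → Type*) [∀ p, Group (G p)] [∀ p, Fintype (G p)]
    (π : ∀ p, Γ →* G p)
    (hsurj : ∀ p ∈ P, Function.Surjective (π p))
    (hsim : Function.Surjective (fun (g : Γ) (p : P) => π p g))
    (Ω : ∀ p, Finset (G p)) :
    Filter.Tendsto (fun n => rwMeasure S n {g | ∀ p ∈ P, π p g ∉ Ω p})
      Filter.atTop
      (nhds (∏ p ∈ P, (1 - ((Ω p).card : ℝ) / (Fintype.card (G p) : ℝ)))) := by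
  classical
  let f : Γ →* ((p : P) → G p) := Pi.monoidHom fun p : P => π p
  have hfs : Function.Surjective f := hsim
  let X : Finset ((p : P) → G p) := Finset.univ.filter fun x => ∀ p : P, x p ∉ Ω p
  have hset : {g : Γ | ∀ p ∈ P, π p g ∉ Ω p} = f ⁻¹' ↑X := by
    ext g
    simp only [Set.mem_setOf_eq, Set.mem_preimage, X, Finset.coe_filter,
      Finset.mem_univ, true_and]
    constructor
    · intro h p; exact h p p.2
    · intro h p hp; exact h ⟨p, hp⟩
  have hX : X.card = ∏ p : P, (Fintype.card (G ↑p) - (Ω ↑p).card) := by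
    rw [show X.card = Fintype.card {x : (p : P) → G ↑p // ∀ p : P, x p ∉ Ω ↑p} from
      (Fintype.card_subtype _).symm]
    rw [Fintype.card_congr (Equiv.subtypePiEquivPi (p := fun (p : P) (y : G ↑p) => y ∉ Ω ↑p)), Fintype.card_pi]
    refine Finset.prod_congr rfl fun p _ => ?_
    rw [Fintype.card_subtype_compl, Fintype.card_coe]
  have hcard : ((X.card : ℝ) / (Fintype.card ((p : P) → G ↑p) : ℝ))
      = ∏ p ∈ P, (1 - ((Ω p).card : ℝ) / (Fintype.card (G p) : ℝ)) := by
    rw [← Finset.prod_coe_sort P (fun p => (1 - ((Ω p).card : ℝ) / (Fintype.card (G p) : ℝ)))]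
    rw [hX, Fintype.card_pi]
    push_cast
    rw [← Finset.prod_div_distrib]
    refine Finset.prod_congr rfl fun p _ => ?_
    have hle : (Ω ↑p).card ≤ Fintype.card (G ↑p) := Finset.card_le_univ _
    have h0 : (Fintype.card (G ↑p) : ℝ) ≠ 0 :=
      Nat.cast_ne_zero.mpr Fintype.card_ne_zero
    rw [Nat.cast_sub hle]
    field_simp
  rw [hset, ← hcard]
  exact key_tendsto S h1 hsym hgen f hfs X
end

section
/- For every integer k ≥ 3, the subgroup of SL_2(ℤ) generated by the two matrices [[1,k],[0,1]] and [[1,0],[k,1]] has infinite index in SL_2(ℤ). -/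
/-- The matrix `[[1,k],[0,1]]` as an element of `SL_2(ℤ)`. -/
def upperGen (k : ℕ) : Matrix.SpecialLinearGroup (Fin 2) ℤ :=
  ⟨!![1, (k : ℤ); 0, 1], by simp [Matrix.det_fin_two_of]⟩

/-- The matrix `[[1,0],[k,1]]` as an element of `SL_2(ℤ)`. -/
def lowerGen (k : ℕ) : Matrix.SpecialLinearGroup (Fin 2) ℤ :=
  ⟨!![1, 0; (k : ℤ), 1], by simp [Matrix.det_fin_two_of]⟩


inductive Rk (k : ℕ) : ℤ → ℤ → Prop
  | zero (x : ℤ) : Rk k x 0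
  | step (x y m : ℤ) (hb : 5 * |x - m * (k : ℤ) * y| ≤ 2 * |y|)
      (ht : Rk k y (x - m * (k : ℤ) * y)) : Rk k x y

lemma abs_mul_k (k : ℕ) (m y : ℤ) : |m * (k : ℤ) * y| = |m| * (k : ℤ) * |y| := by
  rw [abs_mul, abs_mul, Int.abs_natCast]

lemma abs_add_lower (a b : ℤ) : |a| - |b| ≤ |a + b| := by
  have := abs_add_le (a + b) (-b)
  simp at this
  linarith [this]


lemma rk_shiftU {k : ℕ} (d x y : ℤ) (h : Rk k x y) :
    Rk k (x + d * (k : ℤ) * y) y := by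
  cases h with
  | zero => exact Rk.zero _
  | step x y m hb ht =>
    have e : (x + d * (k : ℤ) * y) - (m + d) * (k : ℤ) * y = x - m * (k : ℤ) * y := by ring
    exact Rk.step _ _ (m + d) (by rw [e]; exact hb) (by rw [e]; exact ht)

lemma rk_shiftL {k : ℕ} (hk : 3 ≤ k) (d x y : ℤ) (h : Rk k x y) :
    Rk k x (y + d * (k : ℤ) * x) := by
  have hk3 : (3 : ℤ) ≤ (k : ℤ) := by exact_mod_cast hk
  cases h with
  | zero x =>
    rcases eq_or_ne (d * (k : ℤ) * x) 0 with h0 | h0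
    · rw [zero_add, h0]; exact Rk.zero _
    · have hd : d ≠ 0 := fun h => h0 (by rw [h]; ring)
      have hx : x ≠ 0 := fun h => h0 (by rw [h]; ring)
      have hd1 : 1 ≤ |d| := Int.one_le_abs (by exact_mod_cast hd)
      have hx1 : 1 ≤ |x| := Int.one_le_abs hx
      have habs : |d * (k : ℤ) * x| = |d| * (k : ℤ) * |x| := abs_mul_k k d x
      refine Rk.step _ _ 0 ?_ ?_
      · have : 5 * |x - 0 * (k:ℤ) * (0 + d * (k:ℤ) * x)| = 5 * |x| := by norm_num
        rw [this]
        have h2 : 2 * |0 + d * (k:ℤ) * x| = 2 * (|d| * (k:ℤ) * |x|) := by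
          rw [zero_add, habs]
        rw [h2]
        have p1 : (0:ℤ) ≤ (|d| - 1) * ((k:ℤ) * |x|) :=
          mul_nonneg (by linarith) (mul_nonneg (by linarith) (abs_nonneg x))
        have p2 : (0:ℤ) ≤ ((k:ℤ) - 3) * |x| := mul_nonneg (by linarith) (abs_nonneg x)
        nlinarith [p1, p2, abs_nonneg x]
      · have e : (x - 0 * (k:ℤ) * (0 + d * (k:ℤ) * x)) = x := by ring
        rw [e]
        refine Rk.step _ _ d ?_ ?_
        · have e2 : (0 + d * (k:ℤ) * x) - d * (k:ℤ) * x = 0 := by ring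
          rw [e2]
          simp [abs_nonneg]
        · have e2 : (0 + d * (k:ℤ) * x) - d * (k:ℤ) * x = 0 := by ring
          rw [e2]; exact Rk.zero _
  | step x y m hb ht =>
    rcases eq_or_ne y 0 with hy | hy
    · -- then x = 0
      subst hy
      have hx : x = 0 := by
        have e : |x - m * (k:ℤ) * 0| = |x| := by norm_num
        rw [e] at hb
        simp only [abs_zero, mul_zero] at hb
        have : |x| ≤ 0 := by linarith
        exact abs_eq_zero.mp (le_antisymm this (abs_nonneg x))
      subst hx
      refine Rk.step _ _ 0 ?_ ?_
      · simp
      · simp only [zero_sub, zero_mul, sub_zero, mul_zero, zero_add]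
        have : (0 : ℤ) - 0 * (k:ℤ) * (0 + d * (k:ℤ) * 0) = 0 := by ring
        exact Rk.zero _
    · -- y ≠ 0
      rcases eq_or_ne d 0 with hd | hd
      · have e : y + d * (k:ℤ) * x = y := by rw [hd]; ring
        rw [e]; exact Rk.step _ _ m hb ht
      rcases eq_or_ne m 0 with hm | hm
      · -- m = 0 : hb gives 5|x| ≤ 2|y|, ht : Rk k y x
        subst hm
        have e0 : x - 0 * (k:ℤ) * y = x := by ring
        rw [e0] at hb ht
        rcases eq_or_ne x 0 with hx | hx
        · subst hx
          have e : y + d * (k:ℤ) * 0 = y := by ring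
          rw [e]
          exact Rk.step _ _ 0 (by rw [e0]; exact hb) (by rw [e0]; exact ht)
        · cases ht with
          | zero => exact absurd rfl hx
          | step y x m₂ hb₂ ht₂ =>
            rcases eq_or_ne (m₂ + d) 0 with hmd | hmd
            · have e : y + d * (k:ℤ) * x = y - m₂ * (k:ℤ) * x := by
                have : d = -m₂ := by linarith
                rw [this]; ring
              rw [e]; exact ht₂
            · -- |y'| is large
              have hmd1 : 1 ≤ |m₂ + d| := Int.one_le_abs hmd
              have hx1 : 1 ≤ |x| := Int.one_le_abs hx
              have key : 5 * |x| ≤ 2 * |y + d * (k:ℤ) * x| := by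
                have e : y + d * (k:ℤ) * x = (m₂ + d) * (k:ℤ) * x + (y - m₂ * (k:ℤ) * x) := by
                  ring
                rw [e]
                have t1 : |(m₂ + d) * (k:ℤ) * x| - |y - m₂ * (k:ℤ) * x| ≤
                    |(m₂ + d) * (k:ℤ) * x + (y - m₂ * (k:ℤ) * x)| := abs_add_lower _ _
                have t2 : |(m₂ + d) * (k:ℤ) * x| = |m₂ + d| * (k:ℤ) * |x| := abs_mul_k k _ _
                have p1 : (0:ℤ) ≤ (|m₂ + d| - 1) * ((k:ℤ) * |x|) :=
                  mul_nonneg (by linarith) (mul_nonneg (by linarith) (abs_nonneg x))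
                nlinarith [abs_nonneg x, abs_nonneg (y - m₂ * (k:ℤ) * x)]
              refine Rk.step _ _ 0 ?_ ?_
              · have e : x - 0 * (k:ℤ) * (y + d * (k:ℤ) * x) = x := by ring
                rw [e]; exact key
              · have e : x - 0 * (k:ℤ) * (y + d * (k:ℤ) * x) = x := by ring
                rw [e]
                refine Rk.step _ _ (m₂ + d) ?_ ?_
                · have e2 : (y + d * (k:ℤ) * x) - (m₂ + d) * (k:ℤ) * x
                      = y - m₂ * (k:ℤ) * x := by ring
                  rw [e2]; exact hb₂
                · have e2 : (y + d * (k:ℤ) * x) - (m₂ + d) * (k:ℤ) * x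
                      = y - m₂ * (k:ℤ) * x := by ring
                  rw [e2]; exact ht₂
      · -- m ≠ 0 : x is big compared to y
        have hm1 : 1 ≤ |m| := Int.one_le_abs hm
        have hy1 : 1 ≤ |y| := Int.one_le_abs hy
        have hd1 : 1 ≤ |d| := Int.one_le_abs hd
        have hbig : 5 * (k:ℤ) * |y| - 2 * |y| ≤ 5 * |x| := by
          have e : x = m * (k:ℤ) * y + (x - m * (k:ℤ) * y) := by ring
          have t1 : |m * (k:ℤ) * y| - |x - m * (k:ℤ) * y| ≤ |x| := by
            calc |m * (k:ℤ) * y| - |x - m * (k:ℤ) * y|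
                ≤ |m * (k:ℤ) * y + (x - m * (k:ℤ) * y)| := abs_add_lower _ _
              _ = |x| := by rw [← e]
          have t2 : |m * (k:ℤ) * y| = |m| * (k:ℤ) * |y| := abs_mul_k k _ _
          have p1 : (0:ℤ) ≤ (|m| - 1) * ((k:ℤ) * |y|) :=
            mul_nonneg (by linarith) (mul_nonneg (by linarith) (abs_nonneg y))
          nlinarith [abs_nonneg y]
        have hyx : 5 * |y| ≤ 2 * |x| := by nlinarith [abs_nonneg y]
        have key : 5 * |x| ≤ 2 * |y + d * (k:ℤ) * x| := by
          have e : y + d * (k:ℤ) * x = d * (k:ℤ) * x + y := by ring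
          rw [e]
          have t1 : |d * (k:ℤ) * x| - |y| ≤ |d * (k:ℤ) * x + y| := abs_add_lower _ _
          have t2 : |d * (k:ℤ) * x| = |d| * (k:ℤ) * |x| := abs_mul_k k _ _
          have p1 : (0:ℤ) ≤ (|d| - 1) * ((k:ℤ) * |x|) :=
            mul_nonneg (by linarith) (mul_nonneg (by linarith) (abs_nonneg x))
          nlinarith [abs_nonneg x, abs_nonneg y]
        refine Rk.step _ _ 0 ?_ ?_
        · have e : x - 0 * (k:ℤ) * (y + d * (k:ℤ) * x) = x := by ring
          rw [e]; exact key
        · have e : x - 0 * (k:ℤ) * (y + d * (k:ℤ) * x) = x := by ring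
          rw [e]
          refine Rk.step _ _ d ?_ ?_
          · have e2 : (y + d * (k:ℤ) * x) - d * (k:ℤ) * x = y := by ring
            rw [e2]; exact hyx
          · have e2 : (y + d * (k:ℤ) * x) - d * (k:ℤ) * x = y := by ring
            rw [e2]; exact Rk.step _ _ m hb ht

lemma notRk {k : ℕ} (hk : 3 ≤ k) {a c : ℤ} (h1 : 1 ≤ c) (h2 : c ≤ a) (h3 : a ≤ 2 * c) :
    ¬ Rk k a c := by
  have hk3 : (3 : ℤ) ≤ (k : ℤ) := by exact_mod_cast hk
  intro h
  cases h with
  | zero => omega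
  | step a c m hb ht =>
    have hc : |c| = c := abs_of_nonneg (by linarith)
    rcases le_or_gt m 0 with hm | hm
    · have p : (0:ℤ) ≤ (-m) * ((k:ℤ) * c) :=
        mul_nonneg (by linarith) (mul_nonneg (by linarith) (by linarith))
      have : c ≤ a - m * (k:ℤ) * c := by nlinarith [p]
      have := le_abs_self (a - m * (k:ℤ) * c)
      rw [hc] at hb
      linarith
    · have hm1 : 1 ≤ m := hm
      have p : (0:ℤ) ≤ (m - 1) * ((k:ℤ) * c) :=
        mul_nonneg (by linarith) (mul_nonneg (by linarith) (by linarith))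
      have p2 : (0:ℤ) ≤ ((k:ℤ) - 3) * c := mul_nonneg (by linarith) (by linarith)
      have : c ≤ m * (k:ℤ) * c - a := by nlinarith [p, p2]
      have := neg_le_abs (a - m * (k:ℤ) * c)
      rw [hc] at hb
      linarith

abbrev SL2Z := Matrix.SpecialLinearGroup (Fin 2) ℤ

/-- The stabilizer of the `Rk` relation. -/
def stabR (k : ℕ) : Subgroup SL2Z where
  carrier := {g | ∀ x y : ℤ,
    Rk k x y ↔ Rk k (g.1 0 0 * x + g.1 0 1 * y) (g.1 1 0 * x + g.1 1 1 * y)}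
  one_mem' := by
    intro x y
    simp [Matrix.SpecialLinearGroup.coe_one, Matrix.one_apply]
  mul_mem' := by
    intro g h hg hh x y
    have e1 : (g * h).1 0 0 * x + (g * h).1 0 1 * y
        = g.1 0 0 * (h.1 0 0 * x + h.1 0 1 * y) + g.1 0 1 * (h.1 1 0 * x + h.1 1 1 * y) := by
      show ((g.1 * h.1) 0 0) * x + ((g.1 * h.1) 0 1) * y = _
      simp [Matrix.mul_apply, Fin.sum_univ_two]; ring
    have e2 : (g * h).1 1 0 * x + (g * h).1 1 1 * y
        = g.1 1 0 * (h.1 0 0 * x + h.1 0 1 * y) + g.1 1 1 * (h.1 1 0 * x + h.1 1 1 * y) := by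
      show ((g.1 * h.1) 1 0) * x + ((g.1 * h.1) 1 1) * y = _
      simp [Matrix.mul_apply, Fin.sum_univ_two]; ring
    rw [e1, e2]
    exact (hh x y).trans (hg _ _)
  inv_mem' := by
    intro g hg x y
    have hgg : g.1 * (g⁻¹).1 = 1 := by
      rw [← Matrix.SpecialLinearGroup.coe_mul, mul_inv_cancel]
      rfl
    have e00 : g.1 0 0 * (g⁻¹).1 0 0 + g.1 0 1 * (g⁻¹).1 1 0 = 1 := by
      have := congrFun (congrFun hgg 0) 0
      simpa [Matrix.mul_apply, Fin.sum_univ_two, Matrix.one_apply] using this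
    have e01 : g.1 0 0 * (g⁻¹).1 0 1 + g.1 0 1 * (g⁻¹).1 1 1 = 0 := by
      have := congrFun (congrFun hgg 0) 1
      simpa [Matrix.mul_apply, Fin.sum_univ_two, Matrix.one_apply] using this
    have e10 : g.1 1 0 * (g⁻¹).1 0 0 + g.1 1 1 * (g⁻¹).1 1 0 = 0 := by
      have := congrFun (congrFun hgg 1) 0
      simpa [Matrix.mul_apply, Fin.sum_univ_two, Matrix.one_apply] using this
    have e11 : g.1 1 0 * (g⁻¹).1 0 1 + g.1 1 1 * (g⁻¹).1 1 1 = 1 := by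
      have := congrFun (congrFun hgg 1) 1
      simpa [Matrix.mul_apply, Fin.sum_univ_two, Matrix.one_apply] using this
    have := hg ((g⁻¹).1 0 0 * x + (g⁻¹).1 0 1 * y) ((g⁻¹).1 1 0 * x + (g⁻¹).1 1 1 * y)
    have ex : g.1 0 0 * ((g⁻¹).1 0 0 * x + (g⁻¹).1 0 1 * y)
        + g.1 0 1 * ((g⁻¹).1 1 0 * x + (g⁻¹).1 1 1 * y) = x := by
      linear_combination x * e00 + y * e01
    have ey : g.1 1 0 * ((g⁻¹).1 0 0 * x + (g⁻¹).1 0 1 * y)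
        + g.1 1 1 * ((g⁻¹).1 1 0 * x + (g⁻¹).1 1 1 * y) = y := by
      linear_combination x * e10 + y * e11
    rw [ex, ey] at this
    exact this.symm

lemma upperGen_mem {k : ℕ} (hk : 3 ≤ k) : upperGen k ∈ stabR k := by
  intro x y
  have e0 : (upperGen k).1 0 0 = 1 := rfl
  have e1 : (upperGen k).1 0 1 = (k : ℤ) := rfl
  have e2 : (upperGen k).1 1 0 = 0 := rfl
  have e3 : (upperGen k).1 1 1 = 1 := rfl
  rw [e0, e1, e2, e3]
  constructor
  · intro h
    have := rk_shiftU (k := k) 1 x y h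
    have e : 1 * x + (k:ℤ) * y = x + 1 * (k:ℤ) * y := by ring
    have e' : 0 * x + 1 * y = y := by ring
    rw [e, e']; exact this
  · intro h
    have h' : Rk k (x + 1 * (k:ℤ) * y) (0 * x + 1 * y) := by
      have e : x + 1 * (k:ℤ) * y = 1 * x + (k:ℤ) * y := by ring
      rw [e]; exact h
    have e' : 0 * x + 1 * y = y := by ring
    rw [e'] at h'
    have := rk_shiftU (k := k) (-1) _ y h'
    have e2 : x + 1 * (k:ℤ) * y + (-1) * (k:ℤ) * y = x := by ring
    rwa [e2] at this

lemma lowerGen_mem {k : ℕ} (hk : 3 ≤ k) : lowerGen k ∈ stabR k := by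
  intro x y
  have e0 : (lowerGen k).1 0 0 = 1 := rfl
  have e1 : (lowerGen k).1 0 1 = 0 := rfl
  have e2 : (lowerGen k).1 1 0 = (k : ℤ) := rfl
  have e3 : (lowerGen k).1 1 1 = 1 := rfl
  rw [e0, e1, e2, e3]
  constructor
  · intro h
    have := rk_shiftL (k := k) hk 1 x y h
    have e : 1 * x + 0 * y = x := by ring
    have e' : (k:ℤ) * x + 1 * y = y + 1 * (k:ℤ) * x := by ring
    rw [e, e']; exact this
  · intro h
    have hx : 1 * x + 0 * y = x := by ring
    have hy : (k:ℤ) * x + 1 * y = y + 1 * (k:ℤ) * x := by ring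
    rw [hx, hy] at h
    have := rk_shiftL (k := k) hk (-1) _ _ h
    have e2 : y + 1 * (k:ℤ) * x + (-1) * (k:ℤ) * x = y := by ring
    rwa [e2] at this

/-- The hyperbolic test matrix `[[2,1],[1,1]]`. -/
def wMat : SL2Z := ⟨!![2, 1; 1, 1], by norm_num [Matrix.det_fin_two_of]⟩

lemma wMat_pow_col (n : ℕ) :
    1 ≤ (wMat ^ (n + 1)).1 1 0 ∧ (wMat ^ (n + 1)).1 1 0 ≤ (wMat ^ (n + 1)).1 0 0 ∧
      (wMat ^ (n + 1)).1 0 0 ≤ 2 * (wMat ^ (n + 1)).1 1 0 := by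
  induction n with
  | zero =>
    rw [pow_one]
    refine ⟨?_, ?_, ?_⟩ <;> norm_num [wMat]
  | succ n ih =>
    obtain ⟨h1, h2, h3⟩ := ih
    have e : wMat ^ (n + 1 + 1) = wMat * wMat ^ (n + 1) := by
      rw [pow_succ']
    have ea : (wMat ^ (n + 1 + 1)).1 0 0
        = 2 * (wMat ^ (n + 1)).1 0 0 + (wMat ^ (n + 1)).1 1 0 := by
      rw [e]
      show ((wMat.1 * (wMat ^ (n+1)).1) 0 0) = _
      simp [Matrix.mul_apply, Fin.sum_univ_two, wMat]
      try ring
    have ec : (wMat ^ (n + 1 + 1)).1 1 0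
        = (wMat ^ (n + 1)).1 0 0 + (wMat ^ (n + 1)).1 1 0 := by
      rw [e]
      show ((wMat.1 * (wMat ^ (n+1)).1) 1 0) = _
      simp [Matrix.mul_apply, Fin.sum_univ_two, wMat]
    exact ⟨by rw [ec]; linarith, by rw [ea, ec]; linarith, by rw [ea, ec]; linarith⟩

theorem stmt11 (k : ℕ) (hk : 3 ≤ k) :
    Infinite (Matrix.SpecialLinearGroup (Fin 2) ℤ ⧸
      Subgroup.closure {upperGen k, lowerGen k}) := by
  set H := Subgroup.closure {upperGen k, lowerGen k} with hH
  have hle : H ≤ stabR k := by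
    rw [hH]
    refine (Subgroup.closure_le _).mpr ?_
    rintro g (rfl | rfl)
    · exact upperGen_mem hk
    · exact lowerGen_mem hk
  have hW : ∀ d : ℕ, wMat ^ (d + 1) ∉ H := by
    intro d hmem
    have hs := hle hmem 1 0
    have h1 : Rk k 1 0 := Rk.zero _
    have h2 := hs.mp h1
    have ex : (wMat ^ (d+1)).1 0 0 * 1 + (wMat ^ (d+1)).1 0 1 * 0
        = (wMat ^ (d+1)).1 0 0 := by ring
    have ey : (wMat ^ (d+1)).1 1 0 * 1 + (wMat ^ (d+1)).1 1 1 * 0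
        = (wMat ^ (d+1)).1 1 0 := by ring
    rw [ex, ey] at h2
    obtain ⟨h3, h4, h5⟩ := wMat_pow_col d
    exact notRk hk h3 h4 h5 h2
  have hinj : Function.Injective
      (fun n : ℕ => (QuotientGroup.mk (wMat ^ n) :
        Matrix.SpecialLinearGroup (Fin 2) ℤ ⧸ H)) := by
    intro m n h
    simp only [] at h
    rcases lt_trichotomy m n with hlt | he | hlt
    · exfalso
      have hmem : (wMat ^ m)⁻¹ * wMat ^ n ∈ H := QuotientGroup.eq.mp h
      have e : (wMat ^ m)⁻¹ * wMat ^ n = wMat ^ (n - m) := by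
        rw [inv_mul_eq_iff_eq_mul, ← pow_add]
        congr 1
        omega
      rw [e] at hmem
      have : n - m = (n - m - 1) + 1 := by omega
      rw [this] at hmem
      exact hW _ hmem
    · exact he
    · exfalso
      have hmem : (wMat ^ n)⁻¹ * wMat ^ m ∈ H := QuotientGroup.eq.mp h.symm
      have e : (wMat ^ n)⁻¹ * wMat ^ m = wMat ^ (m - n) := by
        rw [inv_mul_eq_iff_eq_mul, ← pow_add]
        congr 1
        omega
      rw [e] at hmem
      have : m - n = (m - n - 1) + 1 := by omega
      rw [this] at hmem
      exact hW _ hmem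
  exact Infinite.of_injective _ hinj
end

section
/- Let k ≥ 1 be an integer and let p be a prime not dividing k. Then the image of the subgroup of SL_2(ℤ) generated by the matrices [[1,k],[0,1]] and [[1,0],[k,1]] under entrywise reduction modulo p is all of SL_2(ℤ/pℤ). -/
section Aux

variable {F : Type*} [Field F]

/-- upper elementary matrix in SL2 over a field -/
def myU (a : F) : Matrix.SpecialLinearGroup (Fin 2) F :=
  ⟨!![1, a; 0, 1], by simp [Matrix.det_fin_two_of]⟩

def myL (a : F) : Matrix.SpecialLinearGroup (Fin 2) F :=
  ⟨!![1, 0; a, 1], by simp [Matrix.det_fin_two_of]⟩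

lemma myU_mul (a b : F) : myU a * myU b = myU (a + b) := by
  apply Subtype.ext
  simp only [Matrix.SpecialLinearGroup.coe_mul]
  simp [myU, Matrix.mul_fin_two, add_comm]

lemma myL_mul (a b : F) : myL a * myL b = myL (a + b) := by
  apply Subtype.ext
  simp only [Matrix.SpecialLinearGroup.coe_mul]
  simp [myL, Matrix.mul_fin_two, add_comm]

lemma myU_pow (a : F) (n : ℕ) : myU a ^ n = myU (n * a) := by
  induction n with
  | zero => apply Subtype.ext; simp only [Matrix.SpecialLinearGroup.coe_pow]; simp [myU, Matrix.one_fin_two]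
  | succ n ih => rw [pow_succ, ih, myU_mul]; congr 1; push_cast; ring

lemma myL_pow (a : F) (n : ℕ) : myL a ^ n = myL (n * a) := by
  induction n with
  | zero => apply Subtype.ext; simp only [Matrix.SpecialLinearGroup.coe_pow]; simp [myL, Matrix.one_fin_two]
  | succ n ih => rw [pow_succ, ih, myL_mul]; congr 1; push_cast; ring

lemma myL_inv (a : F) : (myL a)⁻¹ = myL (-a) := by
  apply inv_eq_of_mul_eq_one_right
  rw [myL_mul]; apply Subtype.ext; simp [myL, Matrix.one_fin_two]

/-- decomposition of an SL2 matrix with nonzero lower-left entry -/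
lemma decomp (g : Matrix.SpecialLinearGroup (Fin 2) F)
    (hc : (g : Matrix (Fin 2) (Fin 2) F) 1 0 ≠ 0) :
    g = myU (((g : Matrix (Fin 2) (Fin 2) F) 0 0 - 1) / (g : Matrix (Fin 2) (Fin 2) F) 1 0) *
        myL ((g : Matrix (Fin 2) (Fin 2) F) 1 0) *
        myU (((g : Matrix (Fin 2) (Fin 2) F) 1 1 - 1) / (g : Matrix (Fin 2) (Fin 2) F) 1 0) := by
  obtain ⟨M, hM⟩ := g
  rw [Matrix.det_fin_two] at hM
  apply Subtype.ext
  simp only [Matrix.SpecialLinearGroup.coe_mul]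
  ext i j
  fin_cases i <;> fin_cases j <;>
    simp [myU, myL, Matrix.mul_fin_two] <;> field_simp <;>
    first
      | ring1
      | linear_combination hM
      | linear_combination -hM

end Aux

lemma closure_UL {p : ℕ} [Fact p.Prime] (c : ZMod p) (hc : c ≠ 0) :
    Subgroup.closure {myU c, myL c} = ⊤ := by
  set H := Subgroup.closure {myU c, myL c} with hH
  have hUc : myU c ∈ H := Subgroup.subset_closure (by simp)
  have hLc : myL c ∈ H := Subgroup.subset_closure (by simp)
  have hU : ∀ a : ZMod p, myU a ∈ H := by
    intro a
    have : myU c ^ (a * c⁻¹).val = myU a := by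
      rw [myU_pow, ZMod.natCast_val, ZMod.cast_id]
      congr 1
      field_simp
    exact this ▸ pow_mem hUc _
  have hL : ∀ a : ZMod p, myL a ∈ H := by
    intro a
    have : myL c ^ (a * c⁻¹).val = myL a := by
      rw [myL_pow, ZMod.natCast_val, ZMod.cast_id]
      congr 1
      field_simp
    exact this ▸ pow_mem hLc _
  have key : ∀ g : Matrix.SpecialLinearGroup (Fin 2) (ZMod p),
      (g : Matrix (Fin 2) (Fin 2) (ZMod p)) 1 0 ≠ 0 → g ∈ H := by
    intro g h
    rw [decomp g h]
    exact mul_mem (mul_mem (hU _) (hL _)) (hU _)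
  rw [eq_top_iff]
  intro g _
  by_cases h : (g : Matrix (Fin 2) (Fin 2) (ZMod p)) 1 0 ≠ 0
  · exact key g h
  · push_neg at h
    have hdet : (g : Matrix (Fin 2) (Fin 2) (ZMod p)) 0 0 *
        (g : Matrix (Fin 2) (Fin 2) (ZMod p)) 1 1 = 1 := by
      have := g.prop
      rw [Matrix.det_fin_two] at this
      rw [h] at this
      simpa using this
    have h2 : ((g * myL 1 : Matrix.SpecialLinearGroup (Fin 2) (ZMod p)) :
        Matrix (Fin 2) (Fin 2) (ZMod p)) 1 0 ≠ 0 := by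
      have : ((g * myL 1 : Matrix.SpecialLinearGroup (Fin 2) (ZMod p)) :
          Matrix (Fin 2) (Fin 2) (ZMod p)) 1 0 =
          (g : Matrix (Fin 2) (Fin 2) (ZMod p)) 1 1 := by
        rw [Matrix.SpecialLinearGroup.coe_mul]
        simp [myL, Matrix.mul_apply, Fin.sum_univ_two, h]
      rw [this]
      intro h0
      rw [h0, mul_zero] at hdet
      exact zero_ne_one hdet
    have := mul_mem (key _ h2) (inv_mem (hL 1))
    simpa using this

theorem stmt12 (k : ℕ) (hk : 1 ≤ k) (p : ℕ) (hp : p.Prime) (hpk : ¬ p ∣ k) :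
    Subgroup.map (Matrix.SpecialLinearGroup.map (Int.castRingHom (ZMod p)))
      (Subgroup.closure {upperGen k, lowerGen k}) = ⊤ := by
  haveI : Fact p.Prime := ⟨hp⟩
  have hc : ((k : ℤ) : ZMod p) ≠ 0 := by
    rw [Int.cast_natCast]
    rw [Ne, ZMod.natCast_eq_zero_iff]
    exact hpk
  have hup : (Matrix.SpecialLinearGroup.map (Int.castRingHom (ZMod p))) (upperGen k)
      = myU (((k : ℤ) : ZMod p)) := by
    apply Subtype.ext
    rw [Matrix.SpecialLinearGroup.map_apply_coe]
    ext i j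
    fin_cases i <;> fin_cases j <;>
      simp [upperGen, myU, Matrix.SpecialLinearGroup.map_apply_coe, Matrix.SpecialLinearGroup.coe_mk]
  have hlow : (Matrix.SpecialLinearGroup.map (Int.castRingHom (ZMod p))) (lowerGen k)
      = myL (((k : ℤ) : ZMod p)) := by
    apply Subtype.ext
    rw [Matrix.SpecialLinearGroup.map_apply_coe]
    ext i j
    fin_cases i <;> fin_cases j <;>
      simp [lowerGen, myL, Matrix.SpecialLinearGroup.map_apply_coe, Matrix.SpecialLinearGroup.coe_mk]
  rw [MonoidHom.map_closure, Set.image_insert_eq, Set.image_singleton, hup, hlow]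
  exact closure_UL _ hc
end
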